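/- The function f : ℝ² → ℝ defined by f(x,y) = x³/(x²+y²) for (x,y) ≠ (0,0) and f(0,0) = 0 is arc-analytic: for every real-analytic curve γ : ℝ → ℝ², the composition f ∘ γ is real-analytic. -/

import Mathlib

/-- The function f(x,y) = x³/(x²+y²), f(0,0) = 0. -/
noncomputable def cartanFun (p : ℝ × ℝ) : ℝ :=
  if p = (0, 0) then 0 else p.1 ^ 3 / (p.1 ^ 2 + p.2 ^ 2)

/-!
`cartanFun` is homogeneous of degree one and analytic away from the origin. An analytic curve
through the origin factors as `γ t = (t - t₀) ^ n • g t` with `g t₀ ≠ 0`, so by homogeneity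
`cartanFun (γ t) = (t - t₀) ^ n * cartanFun (g t)`, a product of analytic functions.
-/

open Filter Topology

section Homogeneous

variable {𝕜 E F : Type*} [NontriviallyNormedField 𝕜] [NormedAddCommGroup E] [NormedSpace 𝕜 E]
  [NormedAddCommGroup F] [NormedSpace 𝕜 F]

theorem AnalyticAt.comp_of_homogeneous {f : E → F} {k : ℕ}
    (hf : ∀ (c : 𝕜) (p : E), f (c • p) = c ^ k • f p)
    (hfa : ∀ p ≠ 0, AnalyticAt 𝕜 f p) {γ : 𝕜 → E} {t₀ : 𝕜} (hγ : AnalyticAt 𝕜 γ t₀) :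
    AnalyticAt 𝕜 (f ∘ γ) t₀ := by
  cases hord : analyticOrderAt γ t₀ with
  | top =>
    refine (analyticAt_const (v := f 0)).congr ?_
    filter_upwards [analyticOrderAt_eq_top.mp hord] with t ht
    simp [ht]
  | coe n =>
    obtain ⟨g, hg, hg0, hγg⟩ := hγ.analyticOrderAt_eq_natCast.mp hord
    have hpow : AnalyticAt 𝕜 (fun t ↦ ((t - t₀) ^ n) ^ k) t₀ := by fun_prop
    refine (hpow.smul ((hfa _ hg0).comp hg)).congr ?_
    filter_upwards [hγg] with t ht
    simp [ht, hf]

end Homogeneous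

theorem fst_sq_add_snd_sq_ne_zero {p : ℝ × ℝ} (hp : p ≠ 0) : p.1 ^ 2 + p.2 ^ 2 ≠ 0 := by
  obtain ⟨x, y⟩ := p
  simp only [ne_eq, Prod.mk_eq_zero, not_and_or] at hp
  rcases hp with hx | hy <;> positivity

theorem cartanFun_smul (c : ℝ) (p : ℝ × ℝ) : cartanFun (c • p) = c * cartanFun p := by
  by_cases hc : c = 0
  · simp [cartanFun, hc]
  by_cases hp : p = 0
  · simp [cartanFun, hp]
  have hcp : c • p ≠ 0 := smul_ne_zero hc hp
  have hden := fst_sq_add_snd_sq_ne_zero hp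
  simp only [cartanFun, ← Prod.zero_eq_mk, if_neg hp, if_neg hcp, Prod.smul_fst, Prod.smul_snd,
    smul_eq_mul]
  field_simp

theorem analyticAt_cartanFun {p : ℝ × ℝ} (hp : p ≠ 0) : AnalyticAt ℝ cartanFun p := by
  refine ((analyticAt_fst.pow 3).div ((analyticAt_fst.pow 2).add (analyticAt_snd.pow 2))
    (fst_sq_add_snd_sq_ne_zero hp)).congr ?_
  filter_upwards [continuousAt_id.eventually_ne hp] with q hq
  exact (if_neg hq).symm

/-- `cartanFun` is arc-analytic: its composition with every real-analytic
curve `γ : ℝ → ℝ²` is real-analytic. -/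
theorem cartanFun_arcAnalytic :
    ∀ γ : ℝ → ℝ × ℝ, AnalyticOn ℝ γ Set.univ →
      AnalyticOn ℝ (cartanFun ∘ γ) Set.univ := by
  intro γ hγ t _
  exact (AnalyticAt.comp_of_homogeneous (k := 1)
    (fun c p ↦ by rw [cartanFun_smul, pow_one, smul_eq_mul]) (fun _ ↦ analyticAt_cartanFun)
    ((analyticOn_univ.mp hγ) t trivial)).analyticWithinAt
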